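/- arXiv:2009.09829 — 4 statements merged into one kernel-verified Lean document; each statement's English description precedes it below -/
import Mathlib

section
/- Let H_cts, H(t) ∈ ℝ^{n×n} be symmetric with H_cts ⪰ Λ₀ I (Λ₀ > 0), and suppose ‖H(t) - H_cts‖ ≤ Λ₀/2. Let λ > 0, κ ∈ (0,1], Y ∈ ℝⁿ, u* = κ²H_cts(κ²H_cts+λI)^{-1}Y, and let u(t) satisfy du/dt = κ²H(t)(Y - u(t)) - λu(t). Then d/dt‖u(t)-u*‖₂² ≤ -(κ²Λ₀+λ)‖u(t)-u*‖₂² + 2κ²‖H(t)-H_cts‖·‖u(t)-u*‖₂·‖Y-u*‖₂. -/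
/-!
Write `e = u - u*`. The ridge optimum solves `κ² H_cts (Y - u*) = λ u*`, so the flow becomes
`ė = κ² (H - H_cts)(Y - u*) - κ² H e - λ e`, and `d/dt ‖e‖² = 2⟪e, ė⟫`. The first term is at most
`‖H - H_cts‖ ‖e‖ ‖Y - u*‖`, while `H` inherits coercivity from `H_cts ⪰ Λ₀ I`:
`⟪e, H e⟫ ≥ (Λ₀ - ‖H - H_cts‖) ‖e‖² ≥ Λ₀/2 ‖e‖²`.
-/

open Matrix
open scoped InnerProductSpace RealInnerProductSpace

theorem Matrix.mulVec_sub_mulVec_inv_add_smul_one {m R : Type*} [Fintype m] [DecidableEq m]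
    [CommRing R] (A : Matrix m m R) (l : R) (h : IsUnit (A + l • 1).det) (Y : m → R) :
    A *ᵥ (Y - A *ᵥ ((A + l • 1)⁻¹ *ᵥ Y)) = l • A *ᵥ ((A + l • 1)⁻¹ *ᵥ Y) := by
  set v := (A + l • 1)⁻¹ *ᵥ Y
  have hY : A *ᵥ v + l • v = Y := by
    rw [← one_mulVec v, ← smul_mulVec, mulVec_mulVec, mul_one, ← add_mulVec, mulVec_mulVec,
      mul_nonsing_inv _ h, one_mulVec]
  rw [← hY, add_sub_cancel_left, mulVec_smul]

theorem Matrix.smul_mulVec_sub_sub_smul_eq {m R : Type*} [Fintype m] [CommRing R]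
    (H H₀ : Matrix m m R) {k l : R} {Y u₀ : m → R} (h₀ : (k • H₀) *ᵥ (Y - u₀) = l • u₀)
    (u : m → R) :
    k • (H *ᵥ (Y - u)) - l • u =
      k • ((H - H₀) *ᵥ (Y - u₀)) - (k • (H *ᵥ (u - u₀)) + l • (u - u₀)) := by
  rw [smul_mulVec] at h₀
  rw [sub_mulVec, smul_sub, h₀, mulVec_sub, mulVec_sub, mulVec_sub]
  module

theorem Matrix.PosSemidef.of_sub_smul_one {m : Type*} [Fintype m] [DecidableEq m]
    {A : Matrix m m ℝ} {Λ : ℝ} (hA : (A - Λ • 1).PosSemidef) (hΛ : 0 ≤ Λ) : A.PosSemidef := by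
  simpa using hA.add (PosSemidef.one.smul hΛ)

theorem Matrix.PosSemidef.isUnit_det_smul_add_smul_one {m : Type*} [Fintype m] [DecidableEq m]
    {A : Matrix m m ℝ} (hA : A.PosSemidef) {k l : ℝ} (hk : 0 ≤ k) (hl : 0 < l) :
    IsUnit (k • A + l • 1).det :=
  (isUnit_iff_isUnit_det _).mp (PosDef.posSemidef_add (hA.smul hk) (PosDef.one.smul hl)).isUnit

theorem Matrix.mul_norm_sq_le_inner_toEuclideanCLM {m : Type*} [Fintype m] [DecidableEq m]
    {A : Matrix m m ℝ} {Λ : ℝ} (hA : (A - Λ • 1).PosSemidef) (x : EuclideanSpace ℝ m) :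
    Λ * ‖x‖ ^ 2 ≤ ⟪x, toEuclideanCLM (𝕜 := ℝ) A x⟫ := by
  have := hA.dotProduct_mulVec_nonneg x.ofLp
  rw [EuclideanSpace.inner_eq_star_dotProduct, ← real_inner_self_eq_norm_sq,
    EuclideanSpace.inner_eq_star_dotProduct]
  simpa [sub_mulVec, dotProduct_sub, smul_mulVec, dotProduct_comm (A *ᵥ x.ofLp)] using this

section InnerProduct

variable {E : Type*} [NormedAddCommGroup E] [InnerProductSpace ℝ E]

theorem ContinuousLinearMap.real_inner_apply_le (S : E →L[ℝ] E) (x y : E) :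
    ⟪x, S y⟫ ≤ ‖S‖ * ‖x‖ * ‖y‖ :=
  calc ⟪x, S y⟫ ≤ ‖x‖ * ‖S y‖ := real_inner_le_norm _ _
    _ ≤ ‖x‖ * (‖S‖ * ‖y‖) := by gcongr; exact S.le_opNorm y
    _ = ‖S‖ * ‖x‖ * ‖y‖ := by ring

theorem ContinuousLinearMap.sub_opNorm_mul_norm_sq_le_inner {T T₀ : E →L[ℝ] E} {Λ : ℝ}
    (hT₀ : ∀ x, Λ * ‖x‖ ^ 2 ≤ ⟪x, T₀ x⟫) (x : E) :
    (Λ - ‖T - T₀‖) * ‖x‖ ^ 2 ≤ ⟪x, T x⟫ := by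
  have hΔ := (T₀ - T).real_inner_apply_le x x
  rw [norm_sub_rev, _root_.sub_apply, inner_sub_right] at hΔ
  nlinarith [hT₀ x]

theorem ContinuousLinearMap.two_inner_velocity_le {T T₀ : E →L[ℝ] E} {Λ k l : ℝ}
    (hk : 0 ≤ k) (hl : 0 ≤ l) (hT₀ : ∀ x, Λ * ‖x‖ ^ 2 ≤ ⟪x, T₀ x⟫) (hclose : ‖T - T₀‖ ≤ Λ / 2)
    (e w : E) :
    2 * ⟪e, k • (T - T₀) w - (k • T e + l • e)⟫ ≤
      -(k * Λ + l) * ‖e‖ ^ 2 + 2 * k * ‖T - T₀‖ * ‖e‖ * ‖w‖ := by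
  have hdrift := (T - T₀).real_inner_apply_le e w
  have hcoer := sub_opNorm_mul_norm_sq_le_inner (T := T) hT₀ e
  rw [inner_sub_right, inner_add_right, real_inner_smul_right, real_inner_smul_right,
    real_inner_smul_right, real_inner_self_eq_norm_sq]
  nlinarith [mul_le_mul_of_nonneg_left hdrift hk, mul_le_mul_of_nonneg_left hcoer hk,
    mul_le_mul_of_nonneg_left hclose hk, mul_nonneg hk (sq_nonneg ‖e‖),
    mul_nonneg hl (sq_nonneg ‖e‖)]

end InnerProduct

theorem nn_flow_deriv_bound_general {n : ℕ} (Hcts : Matrix (Fin n) (Fin n) ℝ)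
    (Λ₀ : ℝ) (hΛ₀ : 0 < Λ₀) (hpd : (Hcts - Λ₀ • 1).PosSemidef)
    (H : ℝ → Matrix (Fin n) (Fin n) ℝ)
    (hclose : ∀ t, ‖Matrix.toEuclideanCLM (𝕜 := ℝ) (H t - Hcts)‖ ≤ Λ₀ / 2)
    (l κ : ℝ) (hl : 0 < l)
    (Y ustar : Fin n → ℝ)
    (hstar : ustar = (κ ^ 2 • Hcts).mulVec ((κ ^ 2 • Hcts + l • 1)⁻¹.mulVec Y))
    (u : ℝ → (Fin n → ℝ))
    (hu : ∀ t, HasDerivAt u (κ ^ 2 • (H t).mulVec (Y - u t) - l • u t) t) :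
    ∀ t,
      deriv (fun s => ‖(EuclideanSpace.equiv (Fin n) ℝ).symm (u s - ustar)‖ ^ 2) t ≤
        -(κ ^ 2 * Λ₀ + l) * ‖(EuclideanSpace.equiv (Fin n) ℝ).symm (u t - ustar)‖ ^ 2 +
        2 * κ ^ 2 * ‖Matrix.toEuclideanCLM (𝕜 := ℝ) (H t - Hcts)‖ *
          ‖(EuclideanSpace.equiv (Fin n) ℝ).symm (u t - ustar)‖ *
          ‖(EuclideanSpace.equiv (Fin n) ℝ).symm (Y - ustar)‖ := by
  intro t
  set iE := (EuclideanSpace.equiv (Fin n) ℝ).symm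
  have hfix : (κ ^ 2 • Hcts) *ᵥ (Y - ustar) = l • ustar := hstar ▸
    mulVec_sub_mulVec_inv_add_smul_one _ l
      ((hpd.of_sub_smul_one hΛ₀.le).isUnit_det_smul_add_smul_one (sq_nonneg κ) hl) Y
  have hv : HasDerivAt (fun s => iE (u s - ustar))
      (iE (κ ^ 2 • (H t *ᵥ (Y - u t)) - l • u t)) t :=
    iE.hasFDerivAt.comp_hasDerivAt t ((hu t).sub_const ustar)
  have hvel : iE (κ ^ 2 • (H t *ᵥ (Y - u t)) - l • u t) =
      κ ^ 2 • toEuclideanCLM (𝕜 := ℝ) (H t - Hcts) (iE (Y - ustar)) -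
        (κ ^ 2 • toEuclideanCLM (𝕜 := ℝ) (H t) (iE (u t - ustar)) + l • iE (u t - ustar)) := by
    rw [smul_mulVec_sub_sub_smul_eq (H t) Hcts hfix (u t)]
    simp only [map_sub iE, map_add iE, map_smul iE]
    -- `iE (M *ᵥ x)` and `toEuclideanCLM M (iE x)` agree definitionally
    rfl
  rw [hv.norm_sq.deriv, hvel]
  have hbound := ContinuousLinearMap.two_inner_velocity_le (T := toEuclideanCLM (𝕜 := ℝ) (H t))
    (sq_nonneg κ) hl.le (mul_norm_sq_le_inner_toEuclideanCLM hpd)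
    (by rw [← map_sub]; exact hclose t) (iE (u t - ustar)) (iE (Y - ustar))
  rwa [← map_sub] at hbound

/-- Linear convergence of neural network training (differential form): if the dynamic kernel
`H(t)` stays within operator norm `Λ₀/2` of `H_cts ⪰ Λ₀ I` and
`du/dt = κ² H(t) (Y - u) - λ u`, then
`d/dt ‖u - u*‖² ≤ -(κ²Λ₀+λ)‖u-u*‖² + 2κ²‖H(t)-H_cts‖ ‖u-u*‖ ‖Y-u*‖`. -/
theorem nn_flow_deriv_bound {n : ℕ} (Hcts : Matrix (Fin n) (Fin n) ℝ) (hHcts : Hcts.IsHermitian)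
    (Λ₀ : ℝ) (hΛ₀ : 0 < Λ₀) (hpd : (Hcts - Λ₀ • 1).PosSemidef)
    (H : ℝ → Matrix (Fin n) (Fin n) ℝ) (hHsym : ∀ t, (H t).IsHermitian)
    (hclose : ∀ t, ‖Matrix.toEuclideanCLM (𝕜 := ℝ) (H t - Hcts)‖ ≤ Λ₀ / 2)
    (l κ : ℝ) (hl : 0 < l) (hκ0 : 0 < κ) (hκ1 : κ ≤ 1)
    (Y ustar : Fin n → ℝ)
    (hstar : ustar = (κ ^ 2 • Hcts).mulVec ((κ ^ 2 • Hcts + l • 1)⁻¹.mulVec Y))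
    (u : ℝ → (Fin n → ℝ))
    (hu : ∀ t, HasDerivAt u (κ ^ 2 • (H t).mulVec (Y - u t) - l • u t) t) :
    ∀ t,
      deriv (fun s => ‖(EuclideanSpace.equiv (Fin n) ℝ).symm (u s - ustar)‖ ^ 2) t ≤
        -(κ ^ 2 * Λ₀ + l) * ‖(EuclideanSpace.equiv (Fin n) ℝ).symm (u t - ustar)‖ ^ 2 +
        2 * κ ^ 2 * ‖Matrix.toEuclideanCLM (𝕜 := ℝ) (H t - Hcts)‖ *
          ‖(EuclideanSpace.equiv (Fin n) ℝ).symm (u t - ustar)‖ *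
          ‖(EuclideanSpace.equiv (Fin n) ℝ).symm (Y - ustar)‖ :=
  nn_flow_deriv_bound_general Hcts Λ₀ hΛ₀ hpd H hclose l κ hl Y ustar hstar u hu
end

section
/- Let V be orthogonal and Σ diagonal positive definite with VᵀΣ²V = K + λI, where K is symmetric PSD with eigenvalues λ₁ ≥ ... ≥ λₙ and λ ∈ (0, ‖K‖). For w in the support of the normalized upper leverage distribution q̄_λ = q̃_λ/s (with q̃_λ ≥ q_λ pointwise), define Y(w) = (p(w)/q̄_λ(w))·Σ^{-1}VΦ(w)Φ(w)ᵀVᵀΣ^{-1}. Then ‖Y(w)‖ ≤ s and Y(w)² ⪯ s·Y(w), and hence E_{w∼q̄_λ}[Y(w)²] ⪯ s·diag(λ₁/(λ₁+λ), ..., λₙ/(λₙ+λ)). -/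
/-!
With `B(w) = Σ⁻¹VΦ(w)` one has `(K + λI)⁻¹ = (Σ⁻¹V)ᵀ(Σ⁻¹V)`, so the ridge leverage at `w` is
`p(w) tr (B Bᵀ)` and `Y(w)` is a Gram matrix `C Cᵀ` with `tr (C Cᵀ) ≤ s`. A Gram matrix satisfies
`C Cᵀ ⪯ tr (C Cᵀ) • 1` (Cauchy–Schwarz); this bounds `‖Y‖`, and conjugating `Cᵀ C ⪯ s • 1` by `C`
gives `Y² ⪯ s Y`. Finally `q̄ Y² ⪯ s q̄ Y = s p Σ⁻¹VΦΦᵀVᵀΣ⁻¹` pointwise, and integrating turns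
`∫ p ΦΦᵀ` into `K`.
-/

open Matrix MeasureTheory

attribute [local instance] Matrix.normedAddCommGroup Matrix.normedSpace

/-- The random matrix `Y(w) = (p(w)/q̄_λ(w)) Σ⁻¹VΦ(w)Φ(w)ᵀVᵀΣ⁻¹` appearing in the leverage
score sampling argument (here `q̄_λ(w) = q̃_λ(w)/s`, so `p(w)/q̄_λ(w) = p(w)·s/q̃_λ(w)`). -/
noncomputable def levSampleMatrix {n d₁ d₂ : ℕ}
    (Φ : (Fin d₁ → ℝ) → Matrix (Fin n) (Fin d₂) ℝ)
    (p qtilde : (Fin d₁ → ℝ) → ℝ) (s : ℝ)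
    (S V : Matrix (Fin n) (Fin n) ℝ) (w : Fin d₁ → ℝ) : Matrix (Fin n) (Fin n) ℝ :=
  ((p w * s) / qtilde w) • (S⁻¹ * V * (Φ w * (Φ w)ᵀ) * Vᵀ * S⁻¹)

namespace Matrix

section Gram

theorem smul_mul_transpose_self {m k : Type*} [Fintype k] {c : ℝ} (hc : 0 ≤ c)
    (B : Matrix m k ℝ) :
    c • (B * Bᵀ) = (√c • B) * (√c • B)ᵀ := by
  rw [transpose_smul, Matrix.smul_mul, Matrix.mul_smul, smul_smul, Real.mul_self_sqrt hc]

variable {m k : Type*} [Fintype m] [Fintype k]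

theorem posSemidef_mul_transpose_self (B : Matrix m k ℝ) : (B * Bᵀ).PosSemidef := by
  simpa only [conjTranspose_eq_transpose_of_trivial] using posSemidef_self_mul_conjTranspose B

theorem dotProduct_transpose_mulVec_self_le (B : Matrix m k ℝ) (x : m → ℝ) :
    (Bᵀ *ᵥ x) ⬝ᵥ (Bᵀ *ᵥ x) ≤ (B * Bᵀ).trace * (x ⬝ᵥ x) := by
  have hlhs : (Bᵀ *ᵥ x) ⬝ᵥ (Bᵀ *ᵥ x) = ∑ j, (∑ i, B i j * x i) ^ 2 := by
    simp [dotProduct, mulVec, sq]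
  have htr : (B * Bᵀ).trace = ∑ j, ∑ i, B i j ^ 2 := by
    rw [Finset.sum_comm]; simp [trace, mul_apply, sq]
  rw [hlhs, htr, Finset.sum_mul]
  exact Finset.sum_le_sum fun j _ => by
    simpa only [dotProduct, sq] using Finset.sum_mul_sq_le_sq_mul_sq Finset.univ (B · j) x

theorem posSemidef_trace_smul_one_sub_mul_transpose_self [DecidableEq m] (B : Matrix m k ℝ) :
    ((B * Bᵀ).trace • (1 : Matrix m m ℝ) - B * Bᵀ).PosSemidef := by
  refine posSemidef_iff_dotProduct_mulVec.2
    ⟨(isHermitian_one.smul (IsSelfAdjoint.all _)).sub (posSemidef_mul_transpose_self B).1,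
      fun x => ?_⟩
  have hquad : x ⬝ᵥ (B * Bᵀ) *ᵥ x = (Bᵀ *ᵥ x) ⬝ᵥ (Bᵀ *ᵥ x) := by
    rw [← mulVec_mulVec, dotProduct_mulVec, ← mulVec_transpose]
  simpa [sub_mulVec, smul_mulVec, hquad] using dotProduct_transpose_mulVec_self_le B x

theorem posSemidef_smul_mul_transpose_self_sub_sq [DecidableEq k] (B : Matrix m k ℝ) {s : ℝ}
    (hs : (B * Bᵀ).trace ≤ s) : (s • (B * Bᵀ) - B * Bᵀ * (B * Bᵀ)).PosSemidef := by
  have htr : (Bᵀ * Bᵀᵀ).trace = (B * Bᵀ).trace := by rw [transpose_transpose, trace_mul_comm]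
  have hinner : (s • (1 : Matrix k k ℝ) - Bᵀ * B).PosSemidef := by
    have h := (PosSemidef.one.smul (sub_nonneg.2 (htr ▸ hs))).add
      (posSemidef_trace_smul_one_sub_mul_transpose_self Bᵀ)
    rwa [transpose_transpose, sub_smul, sub_add_sub_cancel] at h
  convert hinner.mul_mul_conjTranspose_same B using 1
  simp only [conjTranspose_eq_transpose_of_trivial, Matrix.mul_sub, Matrix.sub_mul,
    Matrix.mul_smul, Matrix.smul_mul, Matrix.mul_one, Matrix.mul_assoc]

open scoped RealInnerProductSpace in
theorem norm_toEuclideanCLM_le_of_posSemidef [DecidableEq m] {A : Matrix m m ℝ} {s : ℝ}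
    (hs : 0 ≤ s) (h : (s ^ 2 • (1 : Matrix m m ℝ) - Aᵀ * A).PosSemidef) :
    ‖toEuclideanCLM (𝕜 := ℝ) A‖ ≤ s := by
  refine ContinuousLinearMap.opNorm_le_bound _ hs fun x => ?_
  have hquad : ‖toEuclideanCLM (𝕜 := ℝ) A x‖ ^ 2 = x ⬝ᵥ (Aᵀ * A) *ᵥ x := by
    rw [← real_inner_self_eq_norm_sq, ← ContinuousLinearMap.adjoint_inner_right,
      ← inner_toEuclideanCLM, ← conjTranspose_eq_transpose_of_trivial, map_mul,
      ← star_eq_conjTranspose, map_star, ContinuousLinearMap.star_eq_adjoint]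
    rfl
  have hx : ‖x‖ ^ 2 = x ⬝ᵥ x := by
    rw [← real_inner_self_eq_norm_sq, EuclideanSpace.inner_eq_star_dotProduct]; rfl
  have hform := h.dotProduct_mulVec_nonneg x
  simp only [star_trivial, sub_mulVec, smul_mulVec, one_mulVec, dotProduct_sub,
    dotProduct_smul, smul_eq_mul, sub_nonneg] at hform
  refine (pow_le_pow_iff_left₀ (norm_nonneg _) (by positivity) two_ne_zero).1 ?_
  rw [mul_pow, hquad, hx]
  exact hform

theorem norm_toEuclideanCLM_mul_transpose_self_le_trace [DecidableEq m] [DecidableEq k]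
    (B : Matrix m k ℝ) : ‖toEuclideanCLM (𝕜 := ℝ) (B * Bᵀ)‖ ≤ (B * Bᵀ).trace := by
  set t := (B * Bᵀ).trace
  have ht : 0 ≤ t := (posSemidef_mul_transpose_self B).trace_nonneg
  refine norm_toEuclideanCLM_le_of_posSemidef ht ?_
  have h := ((posSemidef_trace_smul_one_sub_mul_transpose_self B).smul ht).add
    (posSemidef_smul_mul_transpose_self_sub_sq B le_rfl)
  convert h using 1
  simp only [transpose_mul, transpose_transpose, smul_sub, smul_smul, sq]
  abel

end Gram

theorem trace_transpose_mul_inv_mul {n k : Type*} [Fintype n] [DecidableEq n] [Fintype k]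
    {V S : Matrix n n ℝ} (hV : Vᵀ * V = 1) (hS : Sᵀ = S) (Φ : Matrix n k ℝ) :
    (Φᵀ * (Vᵀ * (S * S) * V)⁻¹ * Φ).trace = (S⁻¹ * V * Φ * (S⁻¹ * V * Φ)ᵀ).trace := by
  rw [trace_mul_comm (S⁻¹ * V * Φ), mul_inv_rev, mul_inv_rev, mul_inv_rev, inv_eq_left_inv hV,
    inv_eq_right_inv hV, transpose_mul, transpose_mul, transpose_nonsing_inv, hS]
  simp only [Matrix.mul_assoc]

section Integral

/- With the local sup norm on matrices, instance search does not find `ContinuousENorm`, so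
integrability is spelled out with the instance used in the statement. -/

variable {α m : Type*} [MeasurableSpace α] {μ : Measure α} [Fintype m]

theorem posSemidef_integral {F : α → Matrix m m ℝ}
    (hF : @Integrable _ _ SeminormedAddGroup.toContinuousENorm _ _ F μ)
    (h : ∀ a, (F a).PosSemidef) : (∫ a, F a ∂μ).PosSemidef := by
  let transposeCLE := (transposeLinearEquiv m m ℝ ℝ).toContinuousLinearEquiv
  let quadCLM (x : m → ℝ) : Matrix m m ℝ →L[ℝ] ℝ := LinearMap.toContinuousLinearMap
    { toFun := fun A => x ⬝ᵥ A *ᵥ x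
      map_add' := fun A B => by simp only [add_mulVec, dotProduct_add]
      map_smul' := fun c A => by simp only [smul_mulVec, dotProduct_smul, RingHom.id_apply] }
  refine posSemidef_iff_dotProduct_mulVec.2 ⟨?_, fun x => ?_⟩
  · rw [IsHermitian, conjTranspose_eq_transpose_of_trivial]
    refine (transposeCLE.integral_comp_comm F).symm.trans
      (integral_congr_ae (ae_of_all _ fun a => ?_))
    exact (conjTranspose_eq_transpose_of_trivial _).symm.trans (h a).1
  · exact (integral_nonneg fun a => (h a).dotProduct_mulVec_nonneg x).trans_eq
      ((quadCLM x).integral_comp_comm hF)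

theorem integral_mul_mul {F : α → Matrix m m ℝ}
    (hF : @Integrable _ _ SeminormedAddGroup.toContinuousENorm _ _ F μ) (A C : Matrix m m ℝ) :
    @Integrable _ _ SeminormedAddGroup.toContinuousENorm _ _ (fun a => A * F a * C) μ ∧
      ∫ a, A * F a * C ∂μ = A * (∫ a, F a ∂μ) * C := by
  let L : Matrix m m ℝ →L[ℝ] Matrix m m ℝ :=
    LinearMap.toContinuousLinearMap (LinearMap.mulRight ℝ C ∘ₗ LinearMap.mulLeft ℝ A)
  exact ⟨L.integrable_comp hF, L.integral_comp_comm hF⟩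

end Integral

end Matrix

section levSampleMatrix

variable {n d₁ d₂ : ℕ} {Φ : (Fin d₁ → ℝ) → Matrix (Fin n) (Fin d₂) ℝ}
  {p qtilde : (Fin d₁ → ℝ) → ℝ} {s : ℝ} {S V : Matrix (Fin n) (Fin n) ℝ} {w : Fin d₁ → ℝ}

theorem levSampleMatrix_eq_smul (hS : Sᵀ = S) :
    levSampleMatrix Φ p qtilde s S V w =
      (p w * s / qtilde w) • (S⁻¹ * V * Φ w * (S⁻¹ * V * Φ w)ᵀ) := by
  simp only [levSampleMatrix, transpose_mul, transpose_nonsing_inv, hS, Matrix.mul_assoc]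

theorem exists_levSampleMatrix_eq_mul_transpose_self (hS : Sᵀ = S) (hp : 0 ≤ p w)
    (hs : 0 ≤ s) (hq : 0 < qtilde w)
    (hlev : p w * (S⁻¹ * V * Φ w * (S⁻¹ * V * Φ w)ᵀ).trace ≤ qtilde w) :
    ∃ C : Matrix (Fin n) (Fin d₂) ℝ,
      levSampleMatrix Φ p qtilde s S V w = C * Cᵀ ∧ (C * Cᵀ).trace ≤ s := by
  have hc : 0 ≤ p w * s / qtilde w := by positivity
  refine ⟨_, (levSampleMatrix_eq_smul hS).trans (smul_mul_transpose_self hc _), ?_⟩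
  rw [← smul_mul_transpose_self hc, trace_smul, smul_eq_mul, div_mul_eq_mul_div, div_le_iff₀ hq]
  nlinarith

theorem posSemidef_smul_sub_levSampleMatrix_sq (hS : Sᵀ = S) (hp : 0 ≤ p w) (hs : 0 < s)
    (hlev : p w * (S⁻¹ * V * Φ w * (S⁻¹ * V * Φ w)ᵀ).trace ≤ qtilde w) :
    (s • (S⁻¹ * V * (p w • (Φ w * (Φ w)ᵀ)) * (Vᵀ * S⁻¹)) - (qtilde w / s) •
      (levSampleMatrix Φ p qtilde s S V w * levSampleMatrix Φ p qtilde s S V w)).PosSemidef := by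
  have hM : S⁻¹ * V * (p w • (Φ w * (Φ w)ᵀ)) * (Vᵀ * S⁻¹) =
      p w • (S⁻¹ * V * Φ w * (S⁻¹ * V * Φ w)ᵀ) := by
    simp only [transpose_mul, transpose_nonsing_inv, hS, Matrix.mul_smul, Matrix.smul_mul,
      Matrix.mul_assoc]
  rcases (mul_nonneg hp (posSemidef_mul_transpose_self _).trace_nonneg).trans hlev |>.eq_or_lt
    with hq | hq
  · rw [← hq, zero_div, zero_smul, sub_zero, hM, smul_smul]
    exact (posSemidef_mul_transpose_self _).smul (mul_nonneg hs.le hp)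
  · -- on the support of `q̄` we have `q̄ Y = p Σ⁻¹VΦΦᵀVᵀΣ⁻¹`
    have hYM : s • (S⁻¹ * V * (p w • (Φ w * (Φ w)ᵀ)) * (Vᵀ * S⁻¹)) =
        (qtilde w / s) • (s • levSampleMatrix Φ p qtilde s S V w) := by
      rw [hM, levSampleMatrix_eq_smul hS, smul_smul, smul_smul, smul_smul]
      congr 1
      field_simp
    obtain ⟨C, hC, htr⟩ := exists_levSampleMatrix_eq_mul_transpose_self hS hp hs.le hq hlev
    rw [hYM, ← smul_sub, hC]
    exact (posSemidef_smul_mul_transpose_self_sub_sq C htr).smul (div_nonneg hq.le hs.le)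

end levSampleMatrix

theorem levSampleMatrix_bounds_general {n d₁ d₂ : ℕ}
    (Φ : (Fin d₁ → ℝ) → Matrix (Fin n) (Fin d₂) ℝ)
    (p : (Fin d₁ → ℝ) → ℝ) (hp : ∀ w, 0 ≤ p w)
    (K : Matrix (Fin n) (Fin n) ℝ)
    (hint : @Integrable _ _ SeminormedAddGroup.toContinuousENorm _ _ (fun w => p w • (Φ w * (Φ w)ᵀ)) volume)
    (hK : K = ∫ w, p w • (Φ w * (Φ w)ᵀ))
    (l : ℝ)
    (V : Matrix (Fin n) (Fin n) ℝ) (hV1 : Vᵀ * V = 1)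
    (σ : Fin n → ℝ)
    (S : Matrix (Fin n) (Fin n) ℝ) (hS : S = Matrix.diagonal σ)
    (hdecomp : Vᵀ * (S * S) * V = K + l • 1)
    (qtilde : (Fin d₁ → ℝ) → ℝ)
    (hmaj : ∀ w, p w * ((Φ w)ᵀ * (K + l • 1)⁻¹ * Φ w).trace ≤ qtilde w)
    (s : ℝ) (hs0 : 0 < s)
    (hint2 : @Integrable _ _ SeminormedAddGroup.toContinuousENorm _ _ (fun w => (qtilde w / s) •
      (levSampleMatrix Φ p qtilde s S V w * levSampleMatrix Φ p qtilde s S V w)) volume) :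
    (∀ w, 0 < qtilde w →
        ‖Matrix.toEuclideanCLM (𝕜 := ℝ) (levSampleMatrix Φ p qtilde s S V w)‖ ≤ s) ∧
    (∀ w, 0 < qtilde w →
        (s • levSampleMatrix Φ p qtilde s S V w -
          levSampleMatrix Φ p qtilde s S V w * levSampleMatrix Φ p qtilde s S V w).PosSemidef) ∧
    (s • (S⁻¹ * (V * K * Vᵀ) * S⁻¹) -
      ∫ w, (qtilde w / s) •
        (levSampleMatrix Φ p qtilde s S V w * levSampleMatrix Φ p qtilde s S V w)).PosSemidef := by
  have hSt : Sᵀ = S := hS ▸ diagonal_transpose σ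
  have hlev : ∀ w, p w * (S⁻¹ * V * Φ w * (S⁻¹ * V * Φ w)ᵀ).trace ≤ qtilde w := fun w => by
    simpa only [← hdecomp, trace_transpose_mul_inv_mul hV1 hSt] using hmaj w
  have hY := fun w (hw : 0 < qtilde w) =>
    exists_levSampleMatrix_eq_mul_transpose_self hSt (hp w) hs0.le hw (hlev w)
  refine ⟨fun w hw => ?_, fun w hw => ?_, ?_⟩
  · obtain ⟨C, hC, htr⟩ := hY w hw
    exact hC ▸ (norm_toEuclideanCLM_mul_transpose_self_le_trace C).trans htr
  · obtain ⟨C, hC, htr⟩ := hY w hw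
    exact hC ▸ posSemidef_smul_mul_transpose_self_sub_sq C htr
  · obtain ⟨hMint, hMintegral⟩ := integral_mul_mul hint (S⁻¹ * V) (Vᵀ * S⁻¹)
    have hsMint : @Integrable _ _ SeminormedAddGroup.toContinuousENorm _ _
        (fun w => s • (S⁻¹ * V * (p w • (Φ w * (Φ w)ᵀ)) * (Vᵀ * S⁻¹))) volume := hMint.smul s
    have h := posSemidef_integral (hsMint.sub hint2)
      fun w => posSemidef_smul_sub_levSampleMatrix_sq hSt (hp w) hs0 (hlev w)
    rw [Pi.sub_def, integral_sub hsMint hint2, integral_smul, hMintegral, ← hK] at h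
    simpa only [Matrix.mul_assoc] using h

/-- Bounds on the leverage-score sampling estimator: `‖Y(w)‖ ≤ s`, `Y(w)² ⪯ s·Y(w)`, and
`E_{w∼q̄_λ}[Y(w)²] ⪯ s · Σ⁻¹VKVᵀΣ⁻¹` (the diagonal matrix `diag(λᵢ/(λᵢ+λ))`). -/
theorem levSampleMatrix_bounds {n d₁ d₂ : ℕ}
    (Φ : (Fin d₁ → ℝ) → Matrix (Fin n) (Fin d₂) ℝ)
    (p : (Fin d₁ → ℝ) → ℝ) (hp : ∀ w, 0 ≤ p w) (hpdens : ∫ w, p w = 1)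
    (K : Matrix (Fin n) (Fin n) ℝ) (hKpsd : K.PosSemidef)
    (hint : @Integrable _ _ SeminormedAddGroup.toContinuousENorm _ _ (fun w => p w • (Φ w * (Φ w)ᵀ)) volume)
    (hK : K = ∫ w, p w • (Φ w * (Φ w)ᵀ))
    (l : ℝ) (hl : 0 < l) (hlK : l < ‖Matrix.toEuclideanCLM (𝕜 := ℝ) K‖)
    (V : Matrix (Fin n) (Fin n) ℝ) (hV1 : Vᵀ * V = 1) (hV2 : V * Vᵀ = 1)
    (σ : Fin n → ℝ) (hσ : ∀ i, 0 < σ i)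
    (S : Matrix (Fin n) (Fin n) ℝ) (hS : S = Matrix.diagonal σ)
    (hdecomp : Vᵀ * (S * S) * V = K + l • 1)
    (qtilde : (Fin d₁ → ℝ) → ℝ)
    (hmaj : ∀ w, p w * ((Φ w)ᵀ * (K + l • 1)⁻¹ * Φ w).trace ≤ qtilde w)
    (s : ℝ) (hs : s = ∫ w, qtilde w) (hqint : Integrable qtilde) (hs0 : 0 < s)
    (hint2 : @Integrable _ _ SeminormedAddGroup.toContinuousENorm _ _ (fun w => (qtilde w / s) •
      (levSampleMatrix Φ p qtilde s S V w * levSampleMatrix Φ p qtilde s S V w)) volume) :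
    (∀ w, 0 < qtilde w →
        ‖Matrix.toEuclideanCLM (𝕜 := ℝ) (levSampleMatrix Φ p qtilde s S V w)‖ ≤ s) ∧
    (∀ w, 0 < qtilde w →
        (s • levSampleMatrix Φ p qtilde s S V w -
          levSampleMatrix Φ p qtilde s S V w * levSampleMatrix Φ p qtilde s S V w).PosSemidef) ∧
    (s • (S⁻¹ * (V * K * Vᵀ) * S⁻¹) -
      ∫ w, (qtilde w / s) •
        (levSampleMatrix Φ p qtilde s S V w * levSampleMatrix Φ p qtilde s S V w)).PosSemidef :=
  levSampleMatrix_bounds_general Φ p hp K hint hK l V hV1 σ S hS hdecomp qtilde hmaj s hs0 hint2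
end

section
/- Let H_cts, H̄ be n×n symmetric PSD matrices with λ_min(H_cts) = Λ₀ > 0, λ > 0, Δ ∈ (0,1/2), Y ∈ ℝⁿ. If (1-Δ)(H_cts+λI) ⪯ H̄+λI ⪯ (1+Δ)(H_cts+λI), then the two ridge-regression optima u* = H_cts(H_cts+λI)^{-1}Y and ū* = H̄(H̄+λI)^{-1}Y satisfy ‖ū* - u*‖₂ ≤ 2λΔ‖Y‖₂/(Λ₀+λ). -/
/-!
Put `A = H_cts + λI`, `B = H̄ + λI`, `x = A⁻¹Y`, `y = B⁻¹Y`. Then `ū* - u* = λ(x - y)`, and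
`e = x - y` solves `Be = (B - A)x`. The sandwich hypothesis says `-ΔA ⪯ B - A ⪯ ΔA`, so
polarization and AM-GM give `(1 - Δ) eᵀAe ≤ eᵀBe = xᵀ(B - A)e ≤ Δ² xᵀAx + eᵀAe / 4`, whence
`eᵀAe ≤ 4Δ² xᵀAx` as `Δ ≤ 1/2`. Finally `A ⪰ (Λ₀ + λ)I` gives `(Λ₀ + λ)‖e‖² ≤ eᵀAe` and
`(Λ₀ + λ) xᵀAx ≤ ‖Y‖²`.
-/

open Matrix

open scoped MatrixOrder

lemma EuclideanSpace.norm_equiv_symm_sq {ι : Type*} [Fintype ι] (v : ι → ℝ) :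
    ‖(EuclideanSpace.equiv ι ℝ).symm v‖ ^ 2 = v ⬝ᵥ v := by
  rw [EuclideanSpace.real_norm_sq_eq]
  simp [dotProduct, sq]

namespace Matrix

section Loewner

open scoped ComplexOrder

variable {ι 𝕜 : Type*} [RCLike 𝕜]

lemma PosDef.of_le {A B : Matrix ι ι 𝕜} (hA : A.PosDef) (hAB : A ≤ B) : B.PosDef := by
  simpa using hA.add_posSemidef hAB

end Loewner

variable {ι : Type*} [Fintype ι]

section CommRing

variable {R : Type*} [CommRing R] [DecidableEq ι]

lemma mulVec_nonsing_inv_mulVec {M : Matrix ι ι R} (h : IsUnit M.det) (Y : ι → R) :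
    M *ᵥ (M⁻¹ *ᵥ Y) = Y := by
  rw [mulVec_mulVec, mul_nonsing_inv _ h, one_mulVec]

lemma mulVec_inv_add_smul_one_mulVec {H : Matrix ι ι R} {l : R} (h : IsUnit (H + l • 1).det)
    (Y : ι → R) : H *ᵥ ((H + l • 1)⁻¹ *ᵥ Y) = Y - l • ((H + l • 1)⁻¹ *ᵥ Y) := by
  have hY := mulVec_nonsing_inv_mulVec h Y
  rw [add_mulVec, smul_mulVec, one_mulVec] at hY
  rw [eq_sub_iff_add_eq, hY]

end CommRing

lemma dotProduct_mulVec_le_of_le {A B : Matrix ι ι ℝ} (hAB : A ≤ B) (x : ι → ℝ) :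
    x ⬝ᵥ A *ᵥ x ≤ x ⬝ᵥ B *ᵥ x := by
  simpa [sub_mulVec] using (le_iff.mp hAB).dotProduct_mulVec_nonneg x

lemma IsHermitian.dotProduct_mulVec_comm {C : Matrix ι ι ℝ} (hC : C.IsHermitian) (x y : ι → ℝ) :
    x ⬝ᵥ C *ᵥ y = y ⬝ᵥ C *ᵥ x := by
  rw [← dotProduct_transpose_mulVec, ← conjTranspose_eq_transpose_of_trivial, hC.eq]

lemma two_mul_dotProduct_mulVec_le {A C : Matrix ι ι ℝ} {Δ : ℝ} (hC : C.IsHermitian)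
    (hlo : -(Δ • A) ≤ C) (hhi : C ≤ Δ • A) (x y : ι → ℝ) :
    2 * (x ⬝ᵥ C *ᵥ y) ≤ Δ * (x ⬝ᵥ A *ᵥ x + y ⬝ᵥ A *ᵥ y) := by
  have hplus := dotProduct_mulVec_le_of_le hhi (x + y)
  have hminus := dotProduct_mulVec_le_of_le hlo (x - y)
  simp only [mulVec_add, mulVec_sub, dotProduct_add, add_dotProduct, dotProduct_sub,
    sub_dotProduct, smul_mulVec, neg_mulVec, dotProduct_neg, dotProduct_smul, smul_eq_mul,
    hC.dotProduct_mulVec_comm y x] at hplus hminus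
  linarith

lemma mul_dotProduct_mulVec_le [DecidableEq ι] {A : Matrix ι ι ℝ} {μ : ℝ} (hμ : 0 ≤ μ)
    (hμA : μ • 1 ≤ A) {x Y : ι → ℝ} (hx : A *ᵥ x = Y) :
    μ * (x ⬝ᵥ A *ᵥ x) ≤ Y ⬝ᵥ Y := by
  have hcoer : μ * (x ⬝ᵥ x) ≤ x ⬝ᵥ Y := by
    simpa [smul_mulVec, hx] using dotProduct_mulVec_le_of_le hμA x
  -- `2μ xᵀY ≤ μ² xᵀx + YᵀY ≤ μ xᵀY + YᵀY`
  have hsq : 0 ≤ (μ • x - Y) ⬝ᵥ (μ • x - Y) := by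
    simpa using dotProduct_star_self_nonneg (μ • x - Y)
  simp only [dotProduct_sub, sub_dotProduct, dotProduct_smul, smul_dotProduct, smul_eq_mul,
    dotProduct_comm Y x] at hsq
  rw [hx]
  nlinarith [mul_le_mul_of_nonneg_left hcoer hμ]

lemma dotProduct_mulVec_sub_le_of_sandwich {A B : Matrix ι ι ℝ} {Δ : ℝ} (hΔ0 : 0 < Δ)
    (hΔ : Δ ≤ 1 / 2) (hA : A.PosSemidef) (hB : B.IsHermitian) (hlo : (1 - Δ) • A ≤ B)
    (hhi : B ≤ (1 + Δ) • A)
    {x y Y : ι → ℝ} (hx : A *ᵥ x = Y) (hy : B *ᵥ y = Y) :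
    (x - y) ⬝ᵥ A *ᵥ (x - y) ≤ 4 * Δ ^ 2 * (x ⬝ᵥ A *ᵥ x) := by
  set e := x - y
  have hC : (B - A).IsHermitian := hB.sub hA.isHermitian
  have hClo : -(Δ • A) ≤ B - A := le_sub_iff_add_le.mpr (by convert hlo using 1; module)
  have hChi : B - A ≤ Δ • A := sub_le_iff_le_add.mpr (by convert hhi using 1; module)
  have hBe : B *ᵥ e = (B - A) *ᵥ x := by simp only [e, mulVec_sub, sub_mulVec, hx, hy]
  have hcoer : (1 - Δ) * (e ⬝ᵥ A *ᵥ e) ≤ x ⬝ᵥ (B - A) *ᵥ e := by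
    have := dotProduct_mulVec_le_of_le hlo e
    rwa [smul_mulVec, dotProduct_smul, smul_eq_mul, hBe, hC.dotProduct_mulVec_comm] at this
  -- polarization at `2Δ x` and `e` is the AM-GM split of the cross term
  have hcross : 4 * (x ⬝ᵥ (B - A) *ᵥ e) ≤ 4 * Δ ^ 2 * (x ⬝ᵥ A *ᵥ x) + e ⬝ᵥ A *ᵥ e := by
    have := two_mul_dotProduct_mulVec_le hC hClo hChi ((2 * Δ) • x) e
    simp only [mulVec_smul, dotProduct_smul, smul_dotProduct, smul_eq_mul] at this
    exact le_of_mul_le_mul_left (by linarith) hΔ0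
  have hq : 0 ≤ e ⬝ᵥ A *ᵥ e := by simpa using hA.dotProduct_mulVec_nonneg e
  nlinarith [mul_nonneg (by linarith : 0 ≤ 1 - 2 * Δ) hq]

lemma mul_norm_sub_le_of_sandwich [DecidableEq ι] {A B : Matrix ι ι ℝ} {μ Δ : ℝ} (hμ : 0 < μ)
    (hΔ0 : 0 < Δ) (hΔ : Δ ≤ 1 / 2) (hμA : μ • 1 ≤ A) (hB : B.IsHermitian)
    (hlo : (1 - Δ) • A ≤ B) (hhi : B ≤ (1 + Δ) • A)
    {x y Y : ι → ℝ} (hx : A *ᵥ x = Y) (hy : B *ᵥ y = Y) :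
    μ * ‖(EuclideanSpace.equiv ι ℝ).symm (x - y)‖ ≤
      2 * Δ * ‖(EuclideanSpace.equiv ι ℝ).symm Y‖ := by
  have hA : A.PosSemidef := ((PosDef.one.smul hμ).of_le hμA).posSemidef
  have hcoer : μ * ((x - y) ⬝ᵥ (x - y)) ≤ (x - y) ⬝ᵥ A *ᵥ (x - y) := by
    simpa [smul_mulVec] using dotProduct_mulVec_le_of_le hμA (x - y)
  have herr := dotProduct_mulVec_sub_le_of_sandwich hΔ0 hΔ hA hB hlo hhi hx hy
  have henergy := mul_dotProduct_mulVec_le hμ.le hμA hx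
  have hsq : (μ * ‖(EuclideanSpace.equiv ι ℝ).symm (x - y)‖) ^ 2 ≤
      (2 * Δ * ‖(EuclideanSpace.equiv ι ℝ).symm Y‖) ^ 2 := by
    rw [mul_pow, mul_pow, EuclideanSpace.norm_equiv_symm_sq, EuclideanSpace.norm_equiv_symm_sq]
    nlinarith
  exact (pow_le_pow_iff_left₀ (by positivity) (by positivity) two_ne_zero).mp hsq

end Matrix

theorem krr_optima_perturbation_general {n : ℕ} (Hcts Hbar : Matrix (Fin n) (Fin n) ℝ)
    (Λ₀ : ℝ) (hΛ₀ : 0 < Λ₀) (hmin : (Hcts - Λ₀ • 1).PosSemidef)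
    (l Δ : ℝ) (hl : 0 < l) (hΔ0 : 0 < Δ) (hΔ : Δ < 1 / 2)
    (h1 : ((Hbar + l • 1) - (1 - Δ) • (Hcts + l • 1)).PosSemidef)
    (h2 : ((1 + Δ) • (Hcts + l • 1) - (Hbar + l • 1)).PosSemidef)
    (Y ustar ubar : Fin n → ℝ)
    (hustar : ustar = Hcts.mulVec ((Hcts + l • 1)⁻¹.mulVec Y))
    (hubar : ubar = Hbar.mulVec ((Hbar + l • 1)⁻¹.mulVec Y)) :
    ‖(EuclideanSpace.equiv (Fin n) ℝ).symm (ubar - ustar)‖ ≤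
      2 * l * Δ * ‖(EuclideanSpace.equiv (Fin n) ℝ).symm Y‖ / (Λ₀ + l) := by
  have hμA : (Λ₀ + l) • 1 ≤ Hcts + l • 1 := by
    rw [add_smul]
    exact add_le_add_left (le_iff.mpr hmin) _
  have hA : (Hcts + l • 1).PosDef := (PosDef.one.smul (by positivity)).of_le hμA
  have hB : (Hbar + l • 1).PosDef := (hA.smul (by linarith)).of_le h1
  have hAdet := hA.det_pos.ne'.isUnit
  have hBdet := hB.det_pos.ne'.isUnit
  have hdiff : ubar - ustar = l • ((Hcts + l • 1)⁻¹ *ᵥ Y - (Hbar + l • 1)⁻¹ *ᵥ Y) := by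
    rw [hustar, hubar, mulVec_inv_add_smul_one_mulVec hAdet, mulVec_inv_add_smul_one_mulVec hBdet]
    module
  have key := mul_norm_sub_le_of_sandwich (by positivity) hΔ0 hΔ.le hμA hB.isHermitian h1 h2
    (mulVec_nonsing_inv_mulVec hAdet Y) (mulVec_nonsing_inv_mulVec hBdet Y)
  rw [hdiff, map_smul, norm_smul, Real.norm_of_nonneg hl.le, le_div_iff₀ (by positivity)]
  linarith [mul_le_mul_of_nonneg_left key hl.le]

/-- If `H̄ + λI` spectrally `(1±Δ)`-approximates `H_cts + λI` with `Δ ∈ (0,1/2)` and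
`λ_min(H_cts) = Λ₀ > 0`, then the ridge regression optima `u* = H_cts(H_cts+λI)⁻¹Y` and
`ū* = H̄(H̄+λI)⁻¹Y` satisfy `‖ū* - u*‖₂ ≤ 2λΔ‖Y‖₂/(Λ₀+λ)`. -/
theorem krr_optima_perturbation {n : ℕ} (Hcts Hbar : Matrix (Fin n) (Fin n) ℝ)
    (hHcts : Hcts.PosSemidef) (hHbar : Hbar.PosSemidef)
    (Λ₀ : ℝ) (hΛ₀ : 0 < Λ₀) (hmin : (Hcts - Λ₀ • 1).PosSemidef)
    (l Δ : ℝ) (hl : 0 < l) (hΔ0 : 0 < Δ) (hΔ : Δ < 1 / 2)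
    (h1 : ((Hbar + l • 1) - (1 - Δ) • (Hcts + l • 1)).PosSemidef)
    (h2 : ((1 + Δ) • (Hcts + l • 1) - (Hbar + l • 1)).PosSemidef)
    (Y ustar ubar : Fin n → ℝ)
    (hustar : ustar = Hcts.mulVec ((Hcts + l • 1)⁻¹.mulVec Y))
    (hubar : ubar = Hbar.mulVec ((Hbar + l • 1)⁻¹.mulVec Y)) :
    ‖(EuclideanSpace.equiv (Fin n) ℝ).symm (ubar - ustar)‖ ≤
      2 * l * Δ * ‖(EuclideanSpace.equiv (Fin n) ℝ).symm Y‖ / (Λ₀ + l) :=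
  krr_optima_perturbation_general Hcts Hbar Λ₀ hΛ₀ hmin l Δ hl hΔ0 hΔ h1 h2 Y ustar ubar hustar
    hubar
end

section
/- Let w ∈ ℝ^d be fixed with ‖w̃ - w‖₂ ≤ R for a random w̃ ∼ N(0, I_d), and x ∈ ℝ^d with ‖x‖₂ = 1. Define the event A = {∃u : ‖u - w̃‖₂ ≤ R and 1[xᵀw̃ ≥ 0] ≠ 1[xᵀu ≥ 0]}. Then Pr[A] = Pr_{z∼N(0,1)}[|z| < R] ≤ 2R/√(2π). -/
/-! For a unit vector `x`, the map `⟪x, ·⟫` sends the closed `R`-ball around `w` onto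
`[⟪x, w⟫ - R, ⟪x, w⟫ + R]`, so a point of the ball with the other sign exists exactly when
`⟪x, w⟫ ∈ [-R, R)`. Under the standard Gaussian measure `⟪x, w⟫` is a standard Gaussian
(the law is rotation invariant), whose density is at most `1 / √(2π)`. -/

open Matrix MeasureTheory ProbabilityTheory
open Set Metric Real
open scoped RealInnerProductSpace NNReal

section InnerProductSpace

variable {E : Type*} [NormedAddCommGroup E] [InnerProductSpace ℝ E]

lemma image_inner_closedBall {x : E} (hx : ‖x‖ = 1) (w : E) (R : ℝ) :
    (⟪x, ·⟫) '' closedBall w R = Icc (⟪x, w⟫ - R) (⟪x, w⟫ + R) := by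
  ext b
  constructor
  · rintro ⟨u, hu, rfl⟩
    have hCS : |⟪x, u⟫ - ⟪x, w⟫| ≤ R := calc
      |⟪x, u⟫ - ⟪x, w⟫| = |⟪x, u - w⟫| := by rw [inner_sub_right]
      _ ≤ ‖x‖ * ‖u - w‖ := abs_real_inner_le_norm x (u - w)
      _ ≤ R := by rwa [hx, one_mul, ← dist_eq_norm]
    constructor <;> linarith [abs_le.mp hCS]
  · rintro ⟨hlo, hhi⟩
    refine ⟨w + (b - ⟪x, w⟫) • x, ?_, ?_⟩
    · rw [mem_closedBall, dist_eq_norm, add_sub_cancel_left, norm_smul, hx, mul_one,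
        Real.norm_eq_abs, abs_le]
      constructor <;> linarith
    · simp only [inner_add_right, inner_smul_right, real_inner_self_eq_norm_sq, hx]
      ring

lemma stdGaussian_map_strongDual [FiniteDimensional ℝ E] [MeasurableSpace E] [BorelSpace E]
    (L : StrongDual ℝ E) :
    (stdGaussian E).map L = gaussianReal 0 (‖L‖ ^ 2).toNNReal := by
  rw [IsGaussian.map_eq_gaussianReal, integral_strongDual_stdGaussian, variance_dual_stdGaussian]

end InnerProductSpace

lemma exists_sign_change_mem_Icc_iff (a R : ℝ) :
    (∃ b ∈ Icc (a - R) (a + R), ¬(0 ≤ a ↔ 0 ≤ b)) ↔ a ∈ Ico (-R) R := by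
  constructor
  · rintro ⟨b, ⟨hlo, hhi⟩, hflip⟩
    by_cases ha : 0 ≤ a
    · have hb : b < 0 := not_le.mp fun hb => hflip (iff_of_true ha hb)
      constructor <;> linarith
    · have hb : 0 ≤ b := by_contra fun hb => hflip (iff_of_false ha hb)
      constructor <;> linarith
  · rintro ⟨hlo, hhi⟩
    by_cases ha : 0 ≤ a
    · exact ⟨a - R, ⟨le_rfl, by linarith⟩, fun h => by linarith [h.mp ha]⟩
    · exact ⟨a + R, ⟨by linarith, le_rfl⟩, fun h => ha (h.mpr (by linarith))⟩

lemma real_inner_toLp_toLp {ι : Type*} [Fintype ι] (x y : ι → ℝ) :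
    ⟪WithLp.toLp 2 x, WithLp.toLp 2 y⟫ = x ⬝ᵥ y := by
  rw [EuclideanSpace.inner_toLp_toLp, star_trivial, dotProduct_comm]

lemma setOf_exists_sign_change_eq_preimage_Ico {ι : Type*} [Fintype ι] {x : ι → ℝ}
    (hx : ∑ i, x i ^ 2 = 1) (R : ℝ) :
    {w : ι → ℝ | ∃ u : ι → ℝ,
      √(∑ i, (u i - w i) ^ 2) ≤ R ∧ ¬((0 ≤ x ⬝ᵥ w) ↔ (0 ≤ x ⬝ᵥ u))} =
      (x ⬝ᵥ ·) ⁻¹' Ico (-R) R := by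
  have hnorm : ‖WithLp.toLp 2 x‖ = 1 := by
    rw [← pow_eq_one_iff_of_nonneg (norm_nonneg _) two_ne_zero, EuclideanSpace.real_norm_sq_eq,
      hx]
  have hdist (u v : ι → ℝ) :
      dist (WithLp.toLp 2 u) (WithLp.toLp 2 v) = √(∑ i, (u i - v i) ^ 2) := by
    simp [EuclideanSpace.dist_eq, Real.dist_eq, sq_abs]
  ext w
  rw [mem_preimage, ← exists_sign_change_mem_Icc_iff, ← real_inner_toLp_toLp x w,
    ← image_inner_closedBall hnorm, exists_mem_image]
  constructor
  · rintro ⟨u, hu, hflip⟩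
    exact ⟨WithLp.toLp 2 u, by rwa [mem_closedBall, hdist], by simpa only [real_inner_toLp_toLp]⟩
  · rintro ⟨⟨u⟩, hu, hflip⟩
    exact ⟨u, by rwa [← hdist], by simpa only [real_inner_toLp_toLp] using hflip⟩

lemma map_dotProduct_pi_gaussianReal {ι : Type*} [Fintype ι] (x : ι → ℝ) :
    (Measure.pi fun _ : ι => gaussianReal 0 1).map (x ⬝ᵥ ·) =
      gaussianReal 0 (∑ i, x i ^ 2).toNNReal := by
  have hfactor : (x ⬝ᵥ ·) = innerSL ℝ (WithLp.toLp 2 x) ∘ WithLp.toLp 2 :=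
    funext fun w => (real_inner_toLp_toLp x w).symm
  rw [hfactor, ← Measure.map_map (by fun_prop) (by fun_prop), map_pi_eq_stdGaussian,
    stdGaussian_map_strongDual, innerSL_apply_norm, EuclideanSpace.real_norm_sq_eq]

lemma gaussianPDFReal_le (μ : ℝ) (v : ℝ≥0) (z : ℝ) :
    gaussianPDFReal μ v z ≤ (√(2 * π * v))⁻¹ := by
  rw [gaussianPDFReal]
  refine mul_le_of_le_one_right (by positivity) (exp_le_one_iff.mpr ?_)
  exact div_nonpos_of_nonpos_of_nonneg (neg_nonpos.mpr (sq_nonneg _)) (by positivity)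

lemma gaussianReal_le_mul_volume (μ : ℝ) {v : ℝ≥0} (hv : v ≠ 0) (s : Set ℝ) :
    gaussianReal μ v s ≤ ENNReal.ofReal (√(2 * π * v))⁻¹ * volume s := calc
  gaussianReal μ v s = ∫⁻ z in s, gaussianPDF μ v z := gaussianReal_apply μ hv s
  _ ≤ ∫⁻ _ in s, ENNReal.ofReal (√(2 * π * v))⁻¹ :=
    setLIntegral_mono measurable_const fun z _ =>
      ENNReal.ofReal_le_ofReal (gaussianPDFReal_le μ v z)
  _ = _ := setLIntegral_const s _

lemma toReal_gaussianReal_Ioo_le (μ : ℝ) {v : ℝ≥0} (hv : v ≠ 0) {a b : ℝ} (hab : a ≤ b) :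
    (gaussianReal μ v (Ioo a b)).toReal ≤ (b - a) / √(2 * π * v) := calc
  (gaussianReal μ v (Ioo a b)).toReal
      ≤ (ENNReal.ofReal (√(2 * π * v))⁻¹ * volume (Ioo a b)).toReal :=
    ENNReal.toReal_mono (by simp [ENNReal.mul_eq_top]) (gaussianReal_le_mul_volume μ hv _)
  _ = (b - a) / √(2 * π * v) := by
    rw [Real.volume_Ioo, ENNReal.toReal_mul, ENNReal.toReal_ofReal (by positivity),
      ENNReal.toReal_ofReal (sub_nonneg.mpr hab), inv_mul_eq_div]

/-- Anti-concentration step: for `w̃ ∼ N(0, I_d)` and unit vector `x`, the probability that the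
sign of `xᵀu` can differ from that of `xᵀw̃` for some `u` within distance `R` equals
`Pr_{z∼N(0,1)}[|z| < R]`, which is at most `2R/√(2π)`. -/
theorem relu_sign_flip_probability {d : ℕ} (R : ℝ) (hR : 0 ≤ R)
    (x : Fin d → ℝ) (hx : ∑ i, (x i) ^ 2 = 1) :
    (Measure.pi fun _ : Fin d => gaussianReal 0 1)
        {w : Fin d → ℝ | ∃ u : Fin d → ℝ,
          Real.sqrt (∑ i, (u i - w i) ^ 2) ≤ R ∧ ¬((0 ≤ x ⬝ᵥ w) ↔ (0 ≤ x ⬝ᵥ u))} =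
      gaussianReal 0 1 {z : ℝ | |z| < R} ∧
    ((Measure.pi fun _ : Fin d => gaussianReal 0 1)
        {w : Fin d → ℝ | ∃ u : Fin d → ℝ,
          Real.sqrt (∑ i, (u i - w i) ^ 2) ≤ R ∧ ¬((0 ≤ x ⬝ᵥ w) ↔ (0 ≤ x ⬝ᵥ u))}).toReal ≤
      2 * R / Real.sqrt (2 * Real.pi) := by
  have hIoo : {z : ℝ | |z| < R} = Ioo (-R) R := Set.ext fun z => abs_lt (a := z)
  have hprob : (Measure.pi fun _ : Fin d => gaussianReal 0 1)
      {w : Fin d → ℝ | ∃ u : Fin d → ℝ,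
        √(∑ i, (u i - w i) ^ 2) ≤ R ∧ ¬((0 ≤ x ⬝ᵥ w) ↔ (0 ≤ x ⬝ᵥ u))} =
      gaussianReal 0 1 {z : ℝ | |z| < R} := by
    rw [setOf_exists_sign_change_eq_preimage_Ico hx, ← Measure.map_apply (by fun_prop)
      measurableSet_Ico, map_dotProduct_pi_gaussianReal, hx, Real.toNNReal_one, hIoo]
    exact measure_congr
      ((gaussianReal_absolutelyContinuous 0 one_ne_zero).ae_eq Ioo_ae_eq_Ico).symm
  refine ⟨hprob, ?_⟩
  rw [hprob, hIoo]
  convert toReal_gaussianReal_Ioo_le 0 one_ne_zero (neg_le_self hR) using 1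
  simp only [NNReal.coe_one, mul_one, sub_neg_eq_add, two_mul]
end
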